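/- arXiv:2004.09483 — 7 statements merged into one kernel-verified Lean document; each statement's English description precedes it below -/
import Mathlib

section
/- Let K be a compact topological space, e : C(K, ℝ) a continuous positive function, and F : C(K, ℝ) → C(K, ℝ) a map that is additively homogeneous with respect to e (i.e., F(x + α·e) = F(x) + α·e for all x and all real α). Then F is order-preserving (x ≤ y pointwise implies F(x) ≤ F(y) pointwise) if and only if F is nonexpansive in the weighted sup-norm ‖x‖_e := sup_{v ∈ K} |x(v)/e(v)|. -/
open Filter Topology

private lemma bdd_aux {K : Type*} [TopologicalSpace K] [CompactSpace K]
    (f g e : C(K, ℝ)) (he : ∀ v, 0 < e v) :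
    BddAbove (Set.range fun v => |(f v - g v) / e v|) :=
  (isCompact_range (((f.continuous.sub g.continuous).div e.continuous
    fun v => (he v).ne').abs)).bddAbove

theorem stmt0 {K : Type*} [TopologicalSpace K] [CompactSpace K]
    (e : C(K, ℝ)) (he : ∀ v, 0 < e v)
    (F : C(K, ℝ) → C(K, ℝ))
    (hhom : ∀ (x : C(K, ℝ)) (α : ℝ), F (x + α • e) = F x + α • e) :
    (∀ x y : C(K, ℝ), x ≤ y → F x ≤ F y) ↔
      (∀ x y : C(K, ℝ),
        (⨆ v, |(F x v - F y v) / e v|) ≤ ⨆ v, |(x v - y v) / e v|) := by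
  constructor
  · intro hmono x y
    rcases isEmpty_or_nonempty K with h | h
    · simp [Real.iSup_of_isEmpty]
    · set M := ⨆ v, |(x v - y v) / e v| with hM
      have hb : BddAbove (Set.range fun v => |(x v - y v) / e v|) := bdd_aux x y e he
      have hptw : ∀ v, |x v - y v| ≤ M * e v := by
        intro v
        have h1 : |(x v - y v) / e v| ≤ M := le_ciSup hb v
        rw [abs_div, abs_of_pos (he v)] at h1
        exact (div_le_iff₀ (he v)).mp h1
      have hxy : x ≤ y + M • e := by
        rw [ContinuousMap.le_def]
        intro v
        have := hptw v
        have := (abs_le.mp this).2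
        simp only [ContinuousMap.add_apply, ContinuousMap.smul_apply, smul_eq_mul]
        linarith
      have hyx : y ≤ x + M • e := by
        rw [ContinuousMap.le_def]
        intro v
        have := (abs_le.mp (hptw v)).1
        simp only [ContinuousMap.add_apply, ContinuousMap.smul_apply, smul_eq_mul]
        linarith
      have h1 : F x ≤ F y + M • e := by
        have := hmono x (y + M • e) hxy
        rwa [hhom y M] at this
      have h2 : F y ≤ F x + M • e := by
        have := hmono y (x + M • e) hyx
        rwa [hhom x M] at this
      apply ciSup_le
      intro v
      have ha := (ContinuousMap.le_def.mp h1) v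
      have hbv := (ContinuousMap.le_def.mp h2) v
      simp only [ContinuousMap.add_apply, ContinuousMap.smul_apply, smul_eq_mul] at ha hbv
      rw [abs_div, abs_of_pos (he v), div_le_iff₀ (he v)]
      rw [abs_le]
      constructor <;> linarith
  · intro hne x y hxy
    rcases isEmpty_or_nonempty K with h | h
    · rw [ContinuousMap.le_def]; intro v; exact isEmptyElim v
    · set c := ⨆ v, |(x v - y v) / e v| with hc
      have hb : BddAbove (Set.range fun v => |(x v - y v) / e v|) := bdd_aux x y e he
      have hptw : ∀ v, |x v - y v| ≤ c * e v := by
        intro v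
        have h1 : |(x v - y v) / e v| ≤ c := le_ciSup hb v
        rw [abs_div, abs_of_pos (he v)] at h1
        exact (div_le_iff₀ (he v)).mp h1
      set z := x + c • e with hz
      have hyz : ∀ v, |(y v - z v) / e v| ≤ c := by
        intro v
        have h1 := (abs_le.mp (hptw v)).1
        have h2 : x v ≤ y v := ContinuousMap.le_def.mp hxy v
        have hzv : z v = x v + c * e v := by
          simp [hz]
        rw [abs_div, abs_of_pos (he v), div_le_iff₀ (he v), abs_le, hzv]
        constructor <;> linarith
      have hkey : (⨆ v, |(F y v - F z v) / e v|) ≤ c :=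
        le_trans (hne y z) (ciSup_le hyz)
      rw [ContinuousMap.le_def]
      intro v
      have hb2 : BddAbove (Set.range fun v => |(F y v - F z v) / e v|) := bdd_aux (F y) (F z) e he
      have h1 : |(F y v - F z v) / e v| ≤ c := le_trans (le_ciSup hb2 v) hkey
      rw [abs_div, abs_of_pos (he v)] at h1
      have h2 : |F y v - F z v| ≤ c * e v := (div_le_iff₀ (he v)).mp h1
      have hFz : F z v = F x v + c * e v := by
        rw [hz, hhom x c]; simp
      have := (abs_le.mp h2).1
      rw [hFz] at this
      linarith
end

section
/- Let P be an n×n row-stochastic matrix (nonnegative entries, rows summing to 1). Then the Cesàro averages (1/(N+1)) ∑_{j=0}^{N} P^j converge as N → ∞ to a matrix P* satisfying P·P* = P*·P = P*·P* = P*. -/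
open Filter Topology

/-!
The Cesàro means `S N` of a power-bounded element `a` of a finite-dimensional normed algebra stay
in a compact ball, so they have cluster points. The telescoping identity
`S N * a - S N = (a ^ (N + 1) - 1) / (N + 1)` forces every cluster point `p` to satisfy
`p * a = a * p = p`, and then `p * S N = p` and `S N * q = q` for any other cluster point `q`.
Passing to the limit gives `p = p * q = q`, so the cluster point is unique and the means converge.
All powers of a row-stochastic matrix are row-stochastic, hence of `ℓ∞`-operator norm at most `1`.
-/

theorem MapClusterPt.eq_of_tendsto_comp {ι X Y : Type*} [TopologicalSpace X] [TopologicalSpace Y]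
    [T2Space Y] {F : Filter ι} {u : ι → X} {x : X} {f : X → Y} {y : Y}
    (hx : MapClusterPt x F u) (hf : ContinuousAt f x) (hfu : Tendsto (f ∘ u) F (𝓝 y)) :
    f x = y :=
  eq_of_nhds_neBot (ClusterPt.map hx hf (tendsto_map'_iff.2 hfu))

section Algebra

variable {E : Type*} [Ring E] [Algebra ℝ E]

noncomputable def cesaroMean (a : E) (N : ℕ) : E :=
  ((N : ℝ) + 1)⁻¹ • ∑ k ∈ Finset.range (N + 1), a ^ k

theorem inv_succ_smul_sum_range_const (b : E) (N : ℕ) :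
    ((N : ℝ) + 1)⁻¹ • ∑ _k ∈ Finset.range (N + 1), b = b := by
  rw [Finset.sum_const, Finset.card_range, ← Nat.cast_smul_eq_nsmul ℝ, smul_smul, Nat.cast_succ,
    inv_mul_cancel₀ (Nat.cast_add_one_ne_zero N), one_smul]

theorem cesaroMean_mul_sub_self (a : E) (N : ℕ) :
    cesaroMean a N * a - cesaroMean a N = ((N : ℝ) + 1)⁻¹ • (a ^ (N + 1) - 1) := by
  rw [← mul_sub_one, cesaroMean, smul_mul_assoc, geom_sum_mul]

theorem commute_cesaroMean (a : E) (N : ℕ) : Commute a (cesaroMean a N) :=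
  (Commute.sum_right _ _ _ fun k _ => Commute.self_pow a k).smul_right _

theorem mul_cesaroMean_of_mul_eq {a b : E} (h : b * a = b) (N : ℕ) : b * cesaroMean a N = b := by
  have hpow : ∀ k, b * a ^ k = b := fun k => by
    induction k with
    | zero => rw [pow_zero, mul_one]
    | succ k ih => rw [pow_succ, ← mul_assoc, ih, h]
  simp only [cesaroMean, mul_smul_comm, Finset.mul_sum, hpow, inv_succ_smul_sum_range_const]

theorem cesaroMean_mul_of_mul_eq {a b : E} (h : a * b = b) (N : ℕ) : cesaroMean a N * b = b := by
  have hpow : ∀ k, a ^ k * b = b := fun k => by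
    induction k with
    | zero => rw [pow_zero, one_mul]
    | succ k ih => rw [pow_succ', mul_assoc, ih, h]
  simp only [cesaroMean, smul_mul_assoc, Finset.sum_mul, hpow, inv_succ_smul_sum_range_const]

end Algebra

section Normed

variable {E : Type*} [NormedRing E] [NormedAlgebra ℝ E] {a : E} {C : ℝ}

theorem norm_cesaroMean_le (hC : ∀ k, ‖a ^ k‖ ≤ C) (N : ℕ) : ‖cesaroMean a N‖ ≤ C := by
  have hN : (0 : ℝ) < N + 1 := Nat.cast_add_one_pos N
  calc ‖cesaroMean a N‖ ≤ ((N : ℝ) + 1)⁻¹ * ∑ k ∈ Finset.range (N + 1), ‖a ^ k‖ := by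
        rw [cesaroMean, norm_smul, Real.norm_of_nonneg (inv_nonneg.2 hN.le)]
        gcongr
        exact norm_sum_le _ _
    _ ≤ ((N : ℝ) + 1)⁻¹ * ∑ _k ∈ Finset.range (N + 1), C := by gcongr with k; exact hC k
    _ = C := by
      rw [Finset.sum_const, Finset.card_range, nsmul_eq_mul, Nat.cast_succ, ← mul_assoc,
        inv_mul_cancel₀ hN.ne', one_mul]

theorem tendsto_cesaroMean_mul_sub_self (hC : ∀ k, ‖a ^ k‖ ≤ C) :
    Tendsto (fun N => cesaroMean a N * a - cesaroMean a N) atTop (𝓝 0) := by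
  simp only [cesaroMean_mul_sub_self]
  refine (tendsto_one_div_add_atTop_nhds_zero_nat (𝕜 := ℝ)).congr (fun N => one_div _)
    |>.zero_smul_isBoundedUnder_le ⟨C + ‖(1 : E)‖, eventually_map.2 (Eventually.of_forall ?_)⟩
  exact fun N => (norm_sub_le _ _).trans (by gcongr; exact hC _)

theorem mul_eq_self_of_mapClusterPt_cesaroMean (hC : ∀ k, ‖a ^ k‖ ≤ C) {p : E}
    (hp : MapClusterPt p atTop (cesaroMean a)) : p * a = p ∧ a * p = p := by
  have hright := hp.eq_of_tendsto_comp (f := fun x => x * a - x) (by fun_prop)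
    (tendsto_cesaroMean_mul_sub_self hC)
  have hleft := hp.eq_of_tendsto_comp (f := fun x => a * x - x) (by fun_prop)
    ((tendsto_cesaroMean_mul_sub_self hC).congr fun N => by
      simp only [Function.comp, (commute_cesaroMean a N).eq])
  exact ⟨sub_eq_zero.1 hright, sub_eq_zero.1 hleft⟩


theorem mul_eq_left_of_mapClusterPt_cesaroMean {p q : E} (hpa : p * a = p)
    (hq : MapClusterPt q atTop (cesaroMean a)) : p * q = p :=
  hq.eq_of_tendsto_comp (f := (p * ·)) (by fun_prop) <| by
    simp only [Function.comp_def, mul_cesaroMean_of_mul_eq hpa, tendsto_const_nhds]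

theorem mul_eq_right_of_mapClusterPt_cesaroMean {p q : E} (haq : a * q = q)
    (hp : MapClusterPt p atTop (cesaroMean a)) : p * q = q :=
  hp.eq_of_tendsto_comp (f := (· * q)) (by fun_prop) <| by
    simp only [Function.comp_def, cesaroMean_mul_of_mul_eq haq, tendsto_const_nhds]

theorem exists_tendsto_cesaroMean [ProperSpace E] (hC : ∀ k, ‖a ^ k‖ ≤ C) :
    ∃ p : E, Tendsto (cesaroMean a) atTop (𝓝 p) ∧ a * p = p ∧ p * a = p ∧ p * p = p := by
  have hmem : ∀ N, cesaroMean a N ∈ Metric.closedBall (0 : E) C := fun N =>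
    mem_closedBall_zero_iff.2 (norm_cesaroMean_le hC N)
  have hK : IsCompact (Metric.closedBall (0 : E) C) := isCompact_closedBall 0 C
  obtain ⟨p, -, hp⟩ := hK.exists_mapClusterPt_of_frequently (l := atTop) (.of_forall hmem)
  obtain ⟨hpa, hap⟩ := mul_eq_self_of_mapClusterPt_cesaroMean hC hp
  refine ⟨p, hK.tendsto_nhds_of_unique_mapClusterPt (Eventually.of_forall hmem) fun q _ hq => ?_,
    hap, hpa, mul_eq_left_of_mapClusterPt_cesaroMean hpa hp⟩
  obtain ⟨-, haq⟩ := mul_eq_self_of_mapClusterPt_cesaroMean hC hq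
  rw [← mul_eq_right_of_mapClusterPt_cesaroMean haq hp,
    mul_eq_left_of_mapClusterPt_cesaroMean hpa hq]

end Normed

section RowStochastic

attribute [local instance] Matrix.linftyOpNormedRing Matrix.linftyOpNormedAlgebra

variable {n : Type*} [Fintype n] [DecidableEq n]

theorem Matrix.linfty_opNorm_le_one_of_mem_rowStochastic {M : Matrix n n ℝ}
    (hM : M ∈ Matrix.rowStochastic ℝ n) : ‖M‖ ≤ 1 := by
  rw [Matrix.linfty_opNorm_def, NNReal.coe_le_one, Finset.sup_le_iff]
  intro i _
  rw [← NNReal.coe_le_one, NNReal.coe_sum]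
  simp only [coe_nnnorm, Real.norm_of_nonneg (Matrix.nonneg_of_mem_rowStochastic hM),
    Matrix.sum_row_of_mem_rowStochastic hM i, le_refl]

theorem Matrix.exists_tendsto_cesaroMean_of_mem_rowStochastic {P : Matrix n n ℝ}
    (hP : P ∈ Matrix.rowStochastic ℝ n) :
    ∃ Q : Matrix n n ℝ, Tendsto (cesaroMean P) atTop (𝓝 Q) ∧ P * Q = Q ∧ Q * P = Q ∧ Q * Q = Q :=
  exists_tendsto_cesaroMean fun k =>
    Matrix.linfty_opNorm_le_one_of_mem_rowStochastic (pow_mem hP k)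

end RowStochastic

theorem stmt5 {n : ℕ} (P : Matrix (Fin n) (Fin n) ℝ)
    (hnn : ∀ i j, 0 ≤ P i j) (hrow : ∀ i, ∑ j, P i j = 1) :
    ∃ Pstar : Matrix (Fin n) (Fin n) ℝ,
      (∀ i j, Tendsto
        (fun N : ℕ => ((N : ℝ) + 1)⁻¹ * ∑ k ∈ Finset.range (N + 1), (P ^ k) i j)
        atTop (𝓝 (Pstar i j))) ∧
      P * Pstar = Pstar ∧ Pstar * P = Pstar ∧ Pstar * Pstar = Pstar := by
  obtain ⟨Pstar, hlim, hPQ, hQP, hQQ⟩ := Matrix.exists_tendsto_cesaroMean_of_mem_rowStochastic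
    (Matrix.mem_rowStochastic_iff_sum.2 ⟨hnn, hrow⟩)
  refine ⟨Pstar, fun i j => ?_, hPQ, hQP, hQQ⟩
  have hentry := tendsto_pi_nhds.1 (tendsto_pi_nhds.1 hlim i) j
  simpa [cesaroMean, Matrix.sum_apply] using hentry
end

section
/- Let λ > 0, 0 < π ≤ 1, τ₁, τ₂, τ₃ ≥ 0 with τ₁ + πτ₂ > 0 and τ₂ + τ₃ > 0, and N_A, N_P ≥ 0. Define ρ* := min(λ, N_A/(τ₁ + πτ₂), N_P/(π(τ₂ + τ₃))). Then (ρ₁, ρ₃) = (ρ*, πρ*) is a fixed point of the EMS-A Petri net stationary-regime equations, in the sense that there exist u₁, u₃ ∈ ℝ such that (ρ₁,u₁) = min_lex((λ,0), ((1−π)ρ₁+ρ₃, N_A+(1−π)(u₁−ρ₁τ₁)+u₃−ρ₃τ₂)) and (ρ₃,u₃) = min_lex(π(ρ₁, u₁−ρ₁τ₁), (ρ₃, N_P+u₃−ρ₃(τ₂+τ₃))). -/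
set_option maxHeartbeats 1000000

open Classical in
/-- Lexicographic minimum on `ℝ × ℝ` (slope compared first, then intercept). -/
noncomputable def minLex (g h : ℝ × ℝ) : ℝ × ℝ :=
  if g.1 < h.1 ∨ (g.1 = h.1 ∧ g.2 ≤ h.2) then g else h

theorem minLex_left {g h : ℝ × ℝ} (hc : g.1 < h.1 ∨ (g.1 = h.1 ∧ g.2 ≤ h.2)) :
    minLex g h = g := if_pos hc

theorem minLex_right {g h : ℝ × ℝ} (hc : ¬(g.1 < h.1 ∨ (g.1 = h.1 ∧ g.2 ≤ h.2))) :
    minLex g h = h := if_neg hc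

theorem stmt10 (lam π τ₁ τ₂ τ₃ N_A N_P : ℝ)
    (hlam : 0 < lam) (hπ : 0 < π) (hπ1 : π ≤ 1)
    (hτ₁ : 0 ≤ τ₁) (hτ₂ : 0 ≤ τ₂) (hτ₃ : 0 ≤ τ₃)
    (h1 : 0 < τ₁ + π * τ₂) (h2 : 0 < τ₂ + τ₃)
    (hNA : 0 ≤ N_A) (hNP : 0 ≤ N_P) :
    ∃ u₁ u₃ : ℝ,
      let ρ : ℝ := min lam (min (N_A / (τ₁ + π * τ₂)) (N_P / (π * (τ₂ + τ₃))))
      let ρ₁ : ℝ := ρ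
      let ρ₃ : ℝ := π * ρ
      (ρ₁, u₁) = minLex (lam, 0)
          ((1 - π) * ρ₁ + ρ₃, N_A + (1 - π) * (u₁ - ρ₁ * τ₁) + u₃ - ρ₃ * τ₂) ∧
      (ρ₃, u₃) = minLex (π * ρ₁, π * (u₁ - ρ₁ * τ₁))
          (ρ₃, N_P + u₃ - ρ₃ * (τ₂ + τ₃)) := by
  have hden2 : 0 < π * (τ₂ + τ₃) := mul_pos hπ h2
  set A := N_A / (τ₁ + π * τ₂) with hA
  set P := N_P / (π * (τ₂ + τ₃)) with hP
  set ρ : ℝ := min lam (min A P) with hρdef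
  have hρl : ρ ≤ lam := min_le_left _ _
  have hρA : ρ ≤ A := le_trans (min_le_right _ _) (min_le_left _ _)
  have hρP : ρ ≤ P := le_trans (min_le_right _ _) (min_le_right _ _)
  have hc : ρ * (τ₁ + π * τ₂) ≤ N_A := (le_div_iff₀ h1).mp hρA
  have hd : ρ * (π * (τ₂ + τ₃)) ≤ N_P := (le_div_iff₀ hden2).mp hρP
  rcases eq_or_lt_of_le hρl with heq | hlt
  · -- ρ = lam
    refine ⟨0, -(π * ρ * τ₁), ?_, ?_⟩
    · rw [minLex_left]
      · rw [Prod.mk.injEq]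
        exact ⟨heq, rfl⟩
      · right
        refine ⟨?_, ?_⟩
        · show lam = (1 - π) * ρ + π * ρ
          rw [← heq]; ring
        · show (0 : ℝ) ≤ N_A + (1 - π) * (0 - ρ * τ₁) + -(π * ρ * τ₁) - π * ρ * τ₂
          nlinarith
    · rw [minLex_left]
      · rw [Prod.mk.injEq]
        refine ⟨rfl, by ring⟩
      · right
        refine ⟨rfl, ?_⟩
        show π * (0 - ρ * τ₁) ≤ N_P + -(π * ρ * τ₁) - π * ρ * (τ₂ + τ₃)
        nlinarith
  · -- ρ < lam
    have hρmin : ρ = min A P := by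
      rw [hρdef, min_eq_right]
      rw [hρdef] at hlt
      by_contra hcon
      push_neg at hcon
      rw [min_eq_left hcon.le] at hlt
      exact lt_irrefl _ hlt
    have hcd : N_A - ρ * (τ₁ + π * τ₂) = 0 ∨ N_P - ρ * (π * (τ₂ + τ₃)) = 0 := by
      rcases min_cases A P with ⟨hAP, _⟩ | ⟨hAP, _⟩
      · left
        rw [hρmin, hAP, hA, div_mul_cancel₀ _ h1.ne']
        ring
      · right
        rw [hρmin, hAP, hP, div_mul_cancel₀ _ hden2.ne']
        ring
    refine ⟨0, -(N_A - (1 - π) * ρ * τ₁ - π * ρ * τ₂), ?_, ?_⟩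
    · rw [minLex_right]
      · rw [Prod.mk.injEq]
        exact ⟨by ring, by ring⟩
      · push_neg
        refine ⟨?_, ?_⟩
        · show (1 - π) * ρ + π * ρ ≤ lam
          nlinarith
        · intro h
          exfalso
          have h' : lam = (1 - π) * ρ + π * ρ := h
          have : lam = ρ := by rw [h']; ring
          linarith
    · by_cases h : π * (0 - ρ * τ₁) ≤ N_P + -(N_A - (1 - π) * ρ * τ₁ - π * ρ * τ₂) - π * ρ * (τ₂ + τ₃)
      · rw [minLex_left]
        · rw [Prod.mk.injEq]
          refine ⟨rfl, ?_⟩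
          rcases hcd with hz | hz
          · nlinarith
          · nlinarith
        · exact Or.inr ⟨rfl, h⟩
      · rw [minLex_right]
        · rw [Prod.mk.injEq]
          refine ⟨rfl, ?_⟩
          rcases hcd with hz | hz
          · exfalso
            apply h
            nlinarith
          · nlinarith
        · push_neg
          exact ⟨le_refl _, fun _ => lt_of_not_ge h⟩
end

section
/- Let λ, π, α, τ_s, τ₃ > 0 with 0 < π < 1 and 0 < α < 1, and fix N_R with N_R/τ_s < πλ. Define the function ρ₅ of N_P ≥ 0 piecewise: ρ₅(N_P) = N_P/(τ_s+τ₃) for N_P/(τ_s+τ₃) ≤ αN_R/((1+α)τ_s); ρ₅(N_P) = αN_R/τ_s − αN_P/(τ_s+τ₃) for αN_R/((1+α)τ_s) ≤ N_P/(τ_s+τ₃) ≤ N_R/(2τ_s); and ρ₅(N_P) = αN_R/(2τ_s) for N_P/(τ_s+τ₃) ≥ N_R/(2τ_s). Then ρ₅ is continuous but not monotone: it is strictly increasing on the first interval, strictly decreasing on the second (nondegenerate) interval, and constant on the third. In particular ρ₅ is not a nondecreasing function of N_P. -/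
open Set

set_option maxHeartbeats 1600000 in
theorem stmt12 (lam π α τs τ₃ N_R : ℝ)
    (hlam : 0 < lam) (hπ : 0 < π) (hπ1 : π < 1)
    (hα : 0 < α) (hα1 : α < 1) (hτs : 0 < τs) (hτ₃ : 0 < τ₃)
    (hNR : 0 < N_R) (hund : N_R / τs < π * lam)
    (ρ₅ : ℝ → ℝ)
    (hρ₅ : ∀ N_P : ℝ, ρ₅ N_P =
      if N_P / (τs + τ₃) ≤ α * N_R / ((1 + α) * τs) then N_P / (τs + τ₃)
      else if N_P / (τs + τ₃) ≤ N_R / (2 * τs) then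
        α * N_R / τs - α * N_P / (τs + τ₃)
      else α * N_R / (2 * τs)) :
    Continuous ρ₅ ∧
    ((τs + τ₃) * (α * N_R / ((1 + α) * τs)) < (τs + τ₃) * (N_R / (2 * τs))) ∧
    StrictMonoOn ρ₅ (Icc 0 ((τs + τ₃) * (α * N_R / ((1 + α) * τs)))) ∧
    StrictAntiOn ρ₅ (Icc ((τs + τ₃) * (α * N_R / ((1 + α) * τs)))
      ((τs + τ₃) * (N_R / (2 * τs)))) ∧
    (∀ N_P : ℝ, (τs + τ₃) * (N_R / (2 * τs)) ≤ N_P →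
      ρ₅ N_P = α * N_R / (2 * τs)) ∧
    ¬ MonotoneOn ρ₅ (Ici 0) := by
  have hc : (0:ℝ) < τs + τ₃ := by linarith
  have h1α : (0:ℝ) < 1 + α := by linarith
  set a := α * N_R / ((1 + α) * τs) with ha_def
  set b := N_R / (2 * τs) with hb_def
  set C := α * N_R / (2 * τs) with hC_def
  clear_value a b C
  have hapos : 0 < a := by rw [ha_def]; positivity
  have hbpos : 0 < b := by rw [hb_def]; positivity
  have hab : a < b := by
    rw [ha_def, hb_def, div_lt_div_iff₀ (by positivity) (by positivity)]
    nlinarith [mul_pos (mul_pos hNR hτs) (sub_pos.mpr hα1)]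
  have haC : C < a := by
    rw [ha_def, hC_def, div_lt_div_iff₀ (by positivity) (by positivity)]
    nlinarith [mul_pos (mul_pos (mul_pos hα hNR) hτs) (sub_pos.mpr hα1)]
  have hCb : C < b := by
    rw [hC_def, hb_def, div_lt_div_iff₀ (by positivity) (by positivity)]
    nlinarith [mul_pos (mul_pos hNR hτs) (sub_pos.mpr hα1)]
  have hA : α * N_R / τs - α * a = a := by
    rw [ha_def]; field_simp; ring
  have hB : α * N_R / τs - α * b = C := by
    rw [hb_def, hC_def]; field_simp; ring
  -- middle formula
  have hmid : ∀ x : ℝ, (τs + τ₃) * a ≤ x → x ≤ (τs + τ₃) * b →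
      ρ₅ x = α * N_R / τs - α * x / (τs + τ₃) := by
    intro x h1 h2
    have hαx : α * x / (τs + τ₃) = α * (x / (τs + τ₃)) := mul_div_assoc α x _
    rw [hρ₅]
    have ht2 : x / (τs + τ₃) ≤ b := by rw [div_le_iff₀ hc]; nlinarith
    by_cases h : x / (τs + τ₃) ≤ a
    · have hte : x / (τs + τ₃) = a :=
        le_antisymm h (by rw [le_div_iff₀ hc]; nlinarith)
      rw [if_pos h, hte, hαx, hte, hA]
    · rw [if_neg h, if_pos ht2]
  -- constant part
  have hconst : ∀ N_P : ℝ, (τs + τ₃) * b ≤ N_P → ρ₅ N_P = C := by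
    intro x h
    have htb : b ≤ x / (τs + τ₃) := by rw [le_div_iff₀ hc]; nlinarith
    rw [hρ₅, if_neg (by linarith)]
    by_cases h2 : x / (τs + τ₃) ≤ b
    · have hte : x / (τs + τ₃) = b := le_antisymm h2 htb
      rw [if_pos h2, mul_div_assoc α x, hte, hC_def, hb_def]; ring
    · rw [if_neg h2]
  -- continuity via min/max form
  have hfun : ρ₅ = fun x => min (x / (τs + τ₃))
      (max (α * N_R / τs - α * x / (τs + τ₃)) C) := by
    funext x
    have hαx : α * x / (τs + τ₃) = α * (x / (τs + τ₃)) := mul_div_assoc α x _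
    rw [hρ₅]
    set t := x / (τs + τ₃) with ht_def
    clear_value t
    by_cases h1 : t ≤ a
    · rw [if_pos h1]
      have hL : a ≤ α * N_R / τs - α * t := by
        nlinarith [mul_nonneg hα.le (sub_nonneg.mpr h1)]
      have hmax : max (α * N_R / τs - α * x / (τs + τ₃)) C =
          α * N_R / τs - α * x / (τs + τ₃) :=
        max_eq_left (by rw [hαx]; linarith)
      have hmin : min t (α * N_R / τs - α * x / (τs + τ₃)) = t :=
        min_eq_left (by rw [hαx]; linarith)
      rw [hmax, hmin]
    · push_neg at h1
      rw [if_neg (not_le.mpr h1)]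
      by_cases h2 : t ≤ b
      · rw [if_pos h2]
        have hL : C ≤ α * N_R / τs - α * t := by
          nlinarith [mul_nonneg hα.le (sub_nonneg.mpr h2)]
        have hL2 : α * N_R / τs - α * t < a := by
          nlinarith [mul_pos hα (sub_pos.mpr h1)]
        have hmax : max (α * N_R / τs - α * x / (τs + τ₃)) C =
            α * N_R / τs - α * x / (τs + τ₃) :=
          max_eq_left (by rw [hαx]; linarith)
        have hmin : min t (α * N_R / τs - α * x / (τs + τ₃)) =
            α * N_R / τs - α * x / (τs + τ₃) :=
          min_eq_right (by rw [hαx]; linarith)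
        rw [hmax, hmin, hαx]
      · push_neg at h2
        rw [if_neg (not_le.mpr h2)]
        have hL : α * N_R / τs - α * t < C := by
          nlinarith [mul_pos hα (sub_pos.mpr h2)]
        have hmax : max (α * N_R / τs - α * x / (τs + τ₃)) C = C :=
          max_eq_right (by rw [hαx]; linarith)
        have hmin : min t C = C := min_eq_right (by linarith)
        rw [hmax, hmin]
  refine ⟨?_, ?_, ?_, ?_, hconst, ?_⟩
  · rw [hfun]
    fun_prop
  · exact mul_lt_mul_of_pos_left hab hc
  · intro x hx y hy hxy
    have hxa : x / (τs + τ₃) ≤ a := by rw [div_le_iff₀ hc]; nlinarith [hx.2]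
    have hya : y / (τs + τ₃) ≤ a := by rw [div_le_iff₀ hc]; nlinarith [hy.2]
    rw [hρ₅ x, hρ₅ y, if_pos hxa, if_pos hya]
    gcongr
  · intro x hx y hy hxy
    rw [hmid x hx.1 hx.2, hmid y hy.1 hy.2]
    have : α * x / (τs + τ₃) < α * y / (τs + τ₃) := by gcongr
    linarith
  · intro hmono
    have hca : α * ((τs + τ₃) * a) / (τs + τ₃) = α * a := by
      field_simp
    have h1 : ρ₅ ((τs + τ₃) * a) = a := by
      rw [hmid _ le_rfl (by nlinarith), hca, hA]
    have h2 : ρ₅ ((τs + τ₃) * b) = C := hconst _ le_rfl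
    have h3 := hmono (mem_Ici.mpr (by positivity)) (mem_Ici.mpr (by positivity))
      (le_of_lt (mul_lt_mul_of_pos_left hab hc))
    rw [h1, h2] at h3
    linarith
end

section
/- Let Q be a finite set, and for each q ∈ Q let A_q be a nonempty finite set of 'places'. Suppose given, for each q and p ∈ A_q, a constant c_q^p ∈ ℝ, a delay τ_p ≥ 0, a discount κ_q^p ≥ 0, and a probability vector (β_{qq'}^p)_{q'∈Q}. Suppose ρ ∈ ℝ^Q and u ∈ ℝ^Q satisfy the lexicographic system: for all q, ρ_q = min_{p∈A_q} κ_q^p ∑_{q'} β_{qq'}^p ρ_{q'}, and u_q = min over the argmin set A_q* of the first equation of (c_q^p − ρ_q τ_p + κ_q^p ∑_{q'} β_{qq'}^p u_{q'}). Then there exists t₀ ≥ 0 such that z(t) := ρ(t+t₀) + u satisfies, for all t ≥ 0, z_q(t) = min_{p∈A_q} (c_q^p + κ_q^p ∑_{q'} β_{qq'}^p z_{q'}(t − τ_p)). -/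
theorem stmt13 {Q P : Type*} [Fintype Q] (A : Q → Finset P)
    (hA : ∀ q, (A q).Nonempty)
    (c : Q → P → ℝ) (τ : P → ℝ) (hτ : ∀ p, 0 ≤ τ p)
    (κ : Q → P → ℝ) (hκ : ∀ q p, 0 ≤ κ q p)
    (β : Q → P → Q → ℝ)
    (hβnn : ∀ q p q', 0 ≤ β q p q')
    (hβsum : ∀ q, ∀ p ∈ A q, ∑ q', β q p q' = 1)
    (ρ u : Q → ℝ)
    -- (L1): ρ_q = min_{p ∈ A_q} κ_q^p ∑_{q'} β_{qq'}^p ρ_{q'}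
    (hρ : ∀ q, ρ q = (A q).inf' (hA q) fun p => κ q p * ∑ q', β q p q' * ρ q')
    -- (L2): u_q = min over the argmin set A_q^* of (c_q^p − ρ_q τ_p + κ_q^p ∑ β u)
    (hu_le : ∀ q, ∀ p ∈ A q,
      κ q p * (∑ q', β q p q' * ρ q') = ρ q →
      u q ≤ c q p - ρ q * τ p + κ q p * ∑ q', β q p q' * u q')
    (hu_mem : ∀ q, ∃ p ∈ A q,
      κ q p * (∑ q', β q p q' * ρ q') = ρ q ∧
      u q = c q p - ρ q * τ p + κ q p * ∑ q', β q p q' * u q') :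
    ∃ t₀ : ℝ, 0 ≤ t₀ ∧
      ∀ t : ℝ, 0 ≤ t → ∀ q,
        ρ q * (t + t₀) + u q =
          (A q).inf' (hA q) fun p =>
            c q p + κ q p * ∑ q', β q p q' * (ρ q' * (t - τ p + t₀) + u q') := by
  classical
  set R : Q → P → ℝ := fun q p => κ q p * ∑ q', β q p q' * ρ q' with hR
  set g : Q → P → ℝ :=
    fun q p => u q - (c q p - R q p * τ p + κ q p * ∑ q', β q p q' * u q') with hg
  set val : Q → P → ℝ :=
    fun q p => if 0 < R q p - ρ q then g q p / (R q p - ρ q) else 0 with hval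
  set S : Finset ℝ := insert 0 (Finset.univ.biUnion fun q => (A q).image (val q)) with hS
  have hSne : S.Nonempty := ⟨0, by simp [hS]⟩
  refine ⟨S.max' hSne, S.le_max' 0 (by simp [hS]), ?_⟩
  intro t ht q
  set t₀ := S.max' hSne with ht₀def
  have ht₀ : ∀ q p, p ∈ A q → val q p ≤ t₀ := by
    intro q p hp
    apply S.le_max'
    simp only [hS, Finset.mem_insert, Finset.mem_biUnion, Finset.mem_image]
    exact Or.inr ⟨q, Finset.mem_univ q, p, hp, rfl⟩
  have hρle : ∀ q p, p ∈ A q → ρ q ≤ R q p := by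
    intro q p hp
    rw [hρ q]
    exact Finset.inf'_le _ hp
  have hf : ∀ p, c q p + κ q p * ∑ q', β q p q' * (ρ q' * (t - τ p + t₀) + u q')
      = c q p + R q p * (t + t₀) - R q p * τ p + κ q p * ∑ q', β q p q' * u q' := by
    intro p
    have hsum : ∑ q', β q p q' * (ρ q' * (t - τ p + t₀) + u q')
        = (∑ q', β q p q' * ρ q') * (t - τ p + t₀) + ∑ q', β q p q' * u q' := by
      rw [Finset.sum_mul, ← Finset.sum_add_distrib]
      exact Finset.sum_congr rfl fun q' _ => by ring
    rw [hsum, hR]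
    ring
  apply le_antisymm
  · apply Finset.le_inf'
    intro p hp
    rw [hf p]
    have hD := hρle q p hp
    rcases eq_or_lt_of_le hD with h | h
    · have hle := hu_le q p hp h.symm
      have : R q p = ρ q := h.symm
      rw [this]
      linarith
    · have hv := ht₀ q p hp
      have hvv : val q p = g q p / (R q p - ρ q) := by simp [hval, h]
      rw [hvv, div_le_iff₀ (by linarith)] at hv
      have hgt : g q p ≤ (R q p - ρ q) * (t + t₀) := by
        nlinarith [mul_nonneg (by linarith : (0:ℝ) ≤ R q p - ρ q) ht]
      simp only [hg] at hgt
      nlinarith [hgt]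
  · obtain ⟨p, hp, h1, h2⟩ := hu_mem q
    have hle := Finset.inf'_le
      (f := fun p => c q p + κ q p * ∑ q', β q p q' * (ρ q' * (t - τ p + t₀) + u q')) hp
    rw [hf p] at hle
    have hRp : R q p = ρ q := h1
    rw [hRp] at hle
    linarith
end

section
/- Let Q be a finite set, and for each q ∈ Q and p ∈ A_q (A_q finite nonempty) let c_q^p, τ_p, κ_q^p, (β_{qq'}^p) be as in the Petri net dynamics. If z : ℝ → ℝ^Q is eventually affine, z(t) = ρt + u for all t ≥ T₀, and z satisfies z_q(t) = min_{p∈A_q}(c_q^p + κ_q^p ∑_{q'} β_{qq'}^p z_{q'}(t−τ_p)) for all t ≥ T₀ + max_p τ_p, then ρ satisfies ρ_q = min_{p∈A_q} κ_q^p ∑_{q'} β_{qq'}^p ρ_{q'} for every q ∈ Q, and u_q = min_{p ∈ A_q*}(c_q^p − ρ_q τ_p + κ_q^p ∑_{q'} β_{qq'}^p u_{q'}) where A_q* is the set of p achieving the minimum in the equation for ρ_q. -/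
theorem stmt14 {Q P : Type*} [Fintype Q] (A : Q → Finset P)
    (hA : ∀ q, (A q).Nonempty)
    (c : Q → P → ℝ) (τ : P → ℝ) (hτ : ∀ p, 0 ≤ τ p)
    (κ : Q → P → ℝ) (hκ : ∀ q p, 0 ≤ κ q p)
    (β : Q → P → Q → ℝ)
    (hβnn : ∀ q p q', 0 ≤ β q p q')
    (hβsum : ∀ q, ∀ p ∈ A q, ∑ q', β q p q' = 1)
    (z : ℝ → Q → ℝ) (ρ u : Q → ℝ) (T₀ Tm : ℝ)
    (hTm : ∀ q, ∀ p ∈ A q, τ p ≤ Tm)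
    (haff : ∀ t : ℝ, T₀ ≤ t → ∀ q, z t q = ρ q * t + u q)
    (hdyn : ∀ t : ℝ, T₀ + Tm ≤ t → ∀ q,
      z t q = (A q).inf' (hA q) fun p =>
        c q p + κ q p * ∑ q', β q p q' * z (t - τ p) q') :
    (∀ q, ρ q = (A q).inf' (hA q) fun p => κ q p * ∑ q', β q p q' * ρ q') ∧
    (∀ q, ∀ p ∈ A q,
      κ q p * (∑ q', β q p q' * ρ q') = ρ q →
      u q ≤ c q p - ρ q * τ p + κ q p * ∑ q', β q p q' * u q') ∧
    (∀ q, ∃ p ∈ A q,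
      κ q p * (∑ q', β q p q' * ρ q') = ρ q ∧
      u q = c q p - ρ q * τ p + κ q p * ∑ q', β q p q' * u q') := by
  -- key: the dynamics become affine in t
  have key : ∀ q, ∀ t : ℝ, T₀ + Tm ≤ t →
      ρ q * t + u q = (A q).inf' (hA q) (fun p =>
        (κ q p * ∑ q', β q p q' * ρ q') * t +
        (c q p - (κ q p * ∑ q', β q p q' * ρ q') * τ p +
          κ q p * ∑ q', β q p q' * u q')) := by
    intro q t ht
    obtain ⟨p₀, hp₀⟩ := hA q
    have hTm0 : 0 ≤ Tm := le_trans (hτ p₀) (hTm q p₀ hp₀)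
    have hT : T₀ ≤ t := by linarith
    rw [← haff t hT q, hdyn t ht q]
    refine Finset.inf'_congr (H := hA q) rfl ?_
    intro p hp
    have hτp : T₀ ≤ t - τ p := by have := hTm q p hp; linarith
    have hz : ∀ q', z (t - τ p) q' = ρ q' * (t - τ p) + u q' :=
      fun q' => haff _ hτp q'
    simp only [hz]
    have hsum : ∑ q', β q p q' * (ρ q' * (t - τ p) + u q')
        = (∑ q', β q p q' * ρ q') * (t - τ p) + ∑ q', β q p q' * u q' := by
      rw [Finset.sum_mul, ← Finset.sum_add_distrib]
      exact Finset.sum_congr rfl (fun q' _ => by ring)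
    rw [hsum]; ring
  -- the slope is bounded below by each candidate slope
  have h1 : ∀ q, ∀ p ∈ A q, ρ q ≤ κ q p * ∑ q', β q p q' * ρ q' := by
    intro q p hp
    by_contra h
    push_neg at h
    set a : ℝ := κ q p * ∑ q', β q p q' * ρ q' with ha
    set b : ℝ := c q p - a * τ p + κ q p * ∑ q', β q p q' * u q' with hb
    set t : ℝ := max (T₀ + Tm) ((b - u q) / (ρ q - a) + 1) with htdef
    have ht1 : T₀ + Tm ≤ t := le_max_left _ _
    have hkey := key q t ht1
    have hle : ρ q * t + u q ≤ a * t + b := by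
      rw [hkey]; exact Finset.inf'_le _ hp
    have hpos : 0 < ρ q - a := by linarith
    have h2 : (b - u q) / (ρ q - a) < t :=
      lt_of_lt_of_le (lt_add_one _) (le_max_right _ _)
    rw [div_lt_iff₀ hpos] at h2
    nlinarith
  have part1 : ∀ q, ρ q = (A q).inf' (hA q)
      fun p => κ q p * ∑ q', β q p q' * ρ q' := by
    intro q
    refine le_antisymm (Finset.le_inf' _ _ (h1 q)) ?_
    by_contra h
    push_neg at h
    set a : ℝ := (A q).inf' (hA q) (fun p => κ q p * ∑ q', β q p q' * ρ q') with ha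
    set B : ℝ := (A q).inf' (hA q) (fun p =>
      c q p - (κ q p * ∑ q', β q p q' * ρ q') * τ p +
        κ q p * ∑ q', β q p q' * u q') with hB
    set t : ℝ := max (max (T₀ + Tm) 0) ((u q - B) / (a - ρ q) + 1) with htdef
    have ht1 : T₀ + Tm ≤ t := le_trans (le_max_left _ _) (le_max_left _ _)
    have ht0 : (0 : ℝ) ≤ t := le_trans (le_max_right _ _) (le_max_left _ _)
    have hkey := key q t ht1
    obtain ⟨p, hp, heq⟩ := Finset.exists_mem_eq_inf' (hA q) (fun p =>
      (κ q p * ∑ q', β q p q' * ρ q') * t +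
        (c q p - (κ q p * ∑ q', β q p q' * ρ q') * τ p +
          κ q p * ∑ q', β q p q' * u q'))
    rw [heq] at hkey
    have hFa : a ≤ κ q p * ∑ q', β q p q' * ρ q' := Finset.inf'_le _ hp
    have hGB : B ≤ c q p - (κ q p * ∑ q', β q p q' * ρ q') * τ p +
        κ q p * ∑ q', β q p q' * u q' := Finset.inf'_le _ hp
    have hpos : 0 < a - ρ q := by linarith
    have h2 : (u q - B) / (a - ρ q) < t :=
      lt_of_lt_of_le (lt_add_one _) (le_max_right _ _)
    rw [div_lt_iff₀ hpos] at h2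
    nlinarith [mul_le_mul_of_nonneg_right hFa ht0]
  have part2 : ∀ q, ∀ p ∈ A q,
      κ q p * (∑ q', β q p q' * ρ q') = ρ q →
      u q ≤ c q p - ρ q * τ p + κ q p * ∑ q', β q p q' * u q' := by
    intro q p hp hFp
    have hkey := key q (T₀ + Tm) le_rfl
    have hle : ρ q * (T₀ + Tm) + u q ≤
        (κ q p * ∑ q', β q p q' * ρ q') * (T₀ + Tm) +
        (c q p - (κ q p * ∑ q', β q p q' * ρ q') * τ p +
          κ q p * ∑ q', β q p q' * u q') := by
      rw [hkey]; exact Finset.inf'_le _ hp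
    rw [hFp] at hle
    linarith
  refine ⟨part1, part2, ?_⟩
  intro q
  set t : ℝ := max (T₀ + Tm) (1 + (A q).sup' (hA q) (fun p =>
    (u q - (c q p - (κ q p * ∑ q', β q p q' * ρ q') * τ p +
      κ q p * ∑ q', β q p q' * u q')) /
      ((κ q p * ∑ q', β q p q' * ρ q') - ρ q))) with htdef
  have hkey := key q t (le_max_left _ _)
  obtain ⟨p, hp, heq⟩ := Finset.exists_mem_eq_inf' (hA q) (fun p =>
    (κ q p * ∑ q', β q p q' * ρ q') * t +
      (c q p - (κ q p * ∑ q', β q p q' * ρ q') * τ p +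
        κ q p * ∑ q', β q p q' * u q'))
  rw [heq] at hkey
  by_cases hF : κ q p * ∑ q', β q p q' * ρ q' = ρ q
  · refine ⟨p, hp, hF, ?_⟩
    rw [hF] at hkey
    linarith
  · exfalso
    have hlt : ρ q < κ q p * ∑ q', β q p q' * ρ q' :=
      lt_of_le_of_ne (h1 q p hp) (Ne.symm hF)
    have hsup := Finset.le_sup' (fun p =>
      (u q - (c q p - (κ q p * ∑ q', β q p q' * ρ q') * τ p +
        κ q p * ∑ q', β q p q' * u q')) /
        ((κ q p * ∑ q', β q p q' * ρ q') - ρ q)) hp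
    have h2 : (u q - (c q p - (κ q p * ∑ q', β q p q' * ρ q') * τ p +
        κ q p * ∑ q', β q p q' * u q')) /
        ((κ q p * ∑ q', β q p q' * ρ q') - ρ q) < t := by
      have := le_max_right (T₀ + Tm) (1 + (A q).sup' (hA q) (fun p =>
        (u q - (c q p - (κ q p * ∑ q', β q p q' * ρ q') * τ p +
          κ q p * ∑ q', β q p q' * u q')) /
          ((κ q p * ∑ q', β q p q' * ρ q') - ρ q)))
      linarith
    rw [div_lt_iff₀ (by linarith : (0:ℝ) < (κ q p * ∑ q', β q p q' * ρ q') - ρ q)] at h2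
    nlinarith
end

section
/- Consider the non-Zeno substitution procedure: let Q be a finite set and suppose z : [−T, ∞) → ℝ^Q satisfies, for each q ∈ Q and t ≥ 0, z_q(t) = F_q((z_{q'}(t − s))_{(q',s) ∈ U_q}), where each U_q ⊆ Q × [0, T] is finite and each F_q is an arbitrary function. Suppose the directed graph on Q with an edge q' → q whenever (q', 0) ∈ U_q is acyclic. Then z restricted to [−T, 0] uniquely determines z on all of [−T, ∞): if z and z' satisfy the system and agree on [−T, 0], they agree everywhere. -/
theorem stmt19 {Q : Type*} [Fintype Q] (T : ℝ) (hT : 0 ≤ T)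
    (U : Q → Finset (Q × ℝ))
    (hU : ∀ q, ∀ x ∈ U q, 0 ≤ x.2 ∧ x.2 ≤ T)
    -- non-Zeno: the graph of zero-delay dependencies is acyclic
    (hacyc : ∀ q, ¬ Relation.TransGen (fun q' q : Q => (q', (0 : ℝ)) ∈ U q) q q)
    (F : (q : Q) → ({x : Q × ℝ // x ∈ U q} → ℝ) → ℝ)
    (z z' : ℝ → Q → ℝ)
    (hz : ∀ t : ℝ, 0 ≤ t → ∀ q, z t q = F q fun x => z (t - x.1.2) x.1.1)
    (hz' : ∀ t : ℝ, 0 ≤ t → ∀ q, z' t q = F q fun x => z' (t - x.1.2) x.1.1)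
    (hinit : ∀ t : ℝ, -T ≤ t → t ≤ 0 → z t = z' t) :
    ∀ t : ℝ, -T ≤ t → z t = z' t := by
  set r : Q → Q → Prop := fun q' q => (q', (0 : ℝ)) ∈ U q with hr
  have hwfT : WellFounded (Relation.TransGen r) := by
    haveI : IsTrans Q (Relation.TransGen r) := ⟨fun _ _ _ => Relation.TransGen.trans⟩
    haveI : IsIrrefl Q (Relation.TransGen r) := ⟨hacyc⟩
    exact Finite.wellFounded_of_trans_of_irrefl _
  have hwf : WellFounded r := Subrelation.wf (fun h => Relation.TransGen.single h) hwfT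
  -- minimal positive delay
  set D : Finset ℝ := (Finset.univ.biUnion fun q => (U q).image Prod.snd).filter (0 < ·) with hD
  set τ : ℝ := if h : D.Nonempty then D.min' h else 1 with hτ
  have hτpos : 0 < τ := by
    rw [hτ]
    split
    · rename_i h
      exact (Finset.mem_filter.mp (Finset.min'_mem D h)).2
    · exact one_pos
  have hτle : ∀ q, ∀ x ∈ U q, x.2 ≠ 0 → τ ≤ x.2 := by
    intro q x hx hne
    have hxD : x.2 ∈ D :=
      Finset.mem_filter.mpr ⟨Finset.mem_biUnion.2 ⟨q, Finset.mem_univ q,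
        Finset.mem_image.2 ⟨x, hx, rfl⟩⟩, lt_of_le_of_ne (hU q x hx).1 (Ne.symm hne)⟩
    have hne' : D.Nonempty := ⟨x.2, hxD⟩
    rw [hτ, dif_pos hne']
    exact Finset.min'_le D _ hxD
  have main : ∀ n : ℕ, ∀ t : ℝ, -T ≤ t → t ≤ n * τ → z t = z' t := by
    intro n
    induction n with
    | zero =>
      intro t ht ht0
      exact hinit t ht (by simpa using ht0)
    | succ n ih =>
      intro t ht htn
      by_cases ht0 : t ≤ 0
      · exact hinit t ht ht0
      push_neg at ht0
      funext q
      induction q using hwf.induction with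
      | _ q IH =>
        rw [hz t ht0.le q, hz' t ht0.le q]
        congr 1
        funext x
        obtain ⟨⟨q', s⟩, hx⟩ := x
        by_cases hs : s = 0
        · simp only [hs, sub_zero]
          exact IH q' (by rwa [hr, ← hs])
        · have hτs : τ ≤ s := hτle q (q', s) hx hs
          have hsT : s ≤ T := (hU q (q', s) hx).2
          have h1 : -T ≤ t - s := by linarith
          have h2 : t - s ≤ n * τ := by
            have : (n + 1 : ℕ) * τ = n * τ + τ := by push_cast; ring
            rw [this] at htn
            linarith
          exact congrFun (ih (t - s) h1 h2) q'
  intro t ht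
  obtain ⟨n, hn⟩ := exists_nat_ge (t / τ)
  exact main n t ht ((div_le_iff₀ hτpos).mp hn)
end
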